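/- arXiv:1710.03647 — 2 statements merged into one kernel-verified Lean document; each statement's English description precedes it below -/
import Mathlib

section
/- Let f* be the least energy progress measure of an energy game arena Γ. Then for every vertex v ∈ W₀ (i.e., every vertex from which player 0 has a winning memoryless strategy), f*(v) ⪯ M_Γ, where M_Γ = Σ_{v∈V} max({0} ∪ {−w(v,v') : (v,v') ∈ E}). -/
open scoped Classical
noncomputable section

/-- An energy game arena: vertices `V`, edge relation `E`, integer weights `w`,
player-0 vertices `P0` (player 1 owns the rest), every vertex has a successor. -/
structure Arena (V : Type) where
  E : V → V → Prop
  w : V → V → ℤ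
  P0 : V → Prop
  total : ∀ v, ∃ v', E v v'

variable {V : Type}

/-- `ρ` is a play (infinite path) starting at `v`. -/
def IsPlay (A : Arena V) (v : V) (ρ : ℕ → V) : Prop :=
  ρ 0 = v ∧ ∀ i, A.E (ρ i) (ρ (i + 1))

/-- A memoryless strategy for player 0. -/
def Strategy0 (A : Arena V) (σ : V → V) : Prop :=
  ∀ v, A.P0 v → A.E v (σ v)

/-- A memoryless strategy for player 1. -/
def Strategy1 (A : Arena V) (σ : V → V) : Prop :=
  ∀ v, ¬ A.P0 v → A.E v (σ v)

/-- The play `ρ` is consistent with the player-0 strategy `σ`. -/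
def Consistent0 (A : Arena V) (σ : V → V) (ρ : ℕ → V) : Prop :=
  ∀ j, A.P0 (ρ j) → ρ (j + 1) = σ (ρ j)

/-- The play `ρ` is consistent with the player-1 strategy `σ`. -/
def Consistent1 (A : Arena V) (σ : V → V) (ρ : ℕ → V) : Prop :=
  ∀ j, ¬ A.P0 (ρ j) → ρ (j + 1) = σ (ρ j)

/-- Energy level of the prefix `ρ 0 … ρ j` with initial credit `c`. -/
def energy (A : Arena V) (c : ℕ) (ρ : ℕ → V) (j : ℕ) : ℤ :=
  (c : ℤ) + ∑ i ∈ Finset.range j, A.w (ρ i) (ρ (i + 1))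

/-- The player-0 strategy `σ` is winning from `v` with initial credit `c`. -/
def WinningFrom (A : Arena V) (σ : V → V) (v : V) (c : ℕ) : Prop :=
  ∀ ρ : ℕ → V, IsPlay A v ρ → Consistent0 A σ ρ → ∀ j, 0 ≤ energy A c ρ j

/-- Winning region of player 0. -/
def W0 (A : Arena V) : Set V :=
  {v | ∃ σ : V → V, Strategy0 A σ ∧ ∃ c : ℕ, WinningFrom A σ v c}

/-- `a ⊖ b = max (0, a - b)`, with `⊤ ⊖ b = ⊤`. -/
def osub (a : ℕ∞) (b : ℤ) : ℕ∞ :=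
  a.map (fun n : ℕ => ((n : ℤ) - b).toNat)

/-- Energy progress measure. -/
def IsEPM (A : Arena V) (f : V → ℕ∞) : Prop :=
  (∀ v, A.P0 v → ∃ v', A.E v v' ∧ osub (f v') (A.w v v') ≤ f v) ∧
  (∀ v, ¬ A.P0 v → ∀ v', A.E v v' → osub (f v') (A.w v v') ≤ f v)

/-- New value at `v` computed by the lifting operator. -/
def liftVal (A : Arena V) (f : V → ℕ∞) (v : V) : ℕ∞ :=
  if A.P0 v then sInf {x : ℕ∞ | ∃ v', A.E v v' ∧ x = osub (f v') (A.w v v')}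
  else sSup {x : ℕ∞ | ∃ v', A.E v v' ∧ x = osub (f v') (A.w v v')}

/-- The lifting operator `δ(·, v)`. -/
def liftOp (A : Arena V) (f : V → ℕ∞) (v : V) : V → ℕ∞ :=
  fun u => if u = v then liftVal A f v else f u

/-- `f` violates the EPM local condition at `v`. -/
def Violates (A : Arena V) (f : V → ℕ∞) (v : V) : Prop :=
  (A.P0 v ∧ ∀ v', A.E v v' → f v < osub (f v') (A.w v v')) ∨
  (¬ A.P0 v ∧ ∃ v', A.E v v' ∧ f v < osub (f v') (A.w v v'))

/-- `M_Γ = Σ_{v∈V} max({0} ∪ {−w(v,v') : (v,v') ∈ E})`. -/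
def MGamma (A : Arena V) [Fintype V] : ℕ :=
  ∑ v : V, (Finset.univ.filter (fun v' => A.E v v')).sup (fun v' => (-(A.w v v')).toNat)

/-!
A memoryless strategy `σ` winning from `v` makes its minimal-credit function an energy progress
measure finite at `v`, so `f*(v)` is finite. In the least progress measure every finite value is
reached from a zero of `f*` along tight edges (`f*(u) = f*(u') ⊖ w(u,u')`): the vertices without
such a path could all be lowered by one. Along a simple tight path `f*(v)` is at most the total
energy lost, hence at most the sum over the vertices of their largest loss, which is `M_Γ`.
-/

lemma osub_natCast (m : ℕ) (b : ℤ) : osub m b = ((m - b : ℤ).toNat : ℕ∞) := rfl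

@[simp] lemma osub_top (b : ℤ) : osub ⊤ b = ⊤ := rfl

lemma osub_mono (b : ℤ) : Monotone (osub · b) := by
  intro x y h
  induction y using ENat.recTopCoe with
  | top => exact le_top
  | coe n =>
    induction x using ENat.recTopCoe with
    | top => simp at h
    | coe m =>
      simp only [osub_natCast, Nat.cast_le] at h ⊢
      omega

lemma osub_le_add (x : ℕ∞) (b : ℤ) : osub x b ≤ x + ((-b).toNat : ℕ) := by
  induction x using ENat.recTopCoe with
  | top => simp
  | coe m =>
    rw [osub_natCast, ← Nat.cast_add, Nat.cast_le]
    omega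

lemma osub_sub_one {x : ℕ∞} (hx : x ≠ 0) (b : ℤ) : osub (x - 1) b = osub x b - 1 := by
  induction x using ENat.recTopCoe with
  | top => simp
  | coe m =>
    have hm : m ≠ 0 := by exact_mod_cast hx
    rw [← Nat.cast_one, ← ENat.natCast_sub, osub_natCast, osub_natCast, ← ENat.natCast_sub,
      Nat.cast_inj]
    omega

def IsTight (A : Arena V) (f : V → ℕ∞) (u u' : V) : Prop :=
  A.E u u' ∧ osub (f u') (A.w u u') = f u

section lower

variable {A : Arena V} {f : V → ℕ∞} {D : Set V}

lemma osub_lower_le (hD : ∀ u ∈ D, f u ≠ 0)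
    (hclosed : ∀ u ∈ D, ∀ u', IsTight A f u u' → u' ∈ D)
    {u u' : V} (hE : A.E u u') (h : osub (f u') (A.w u u') ≤ f u) :
    osub (if u' ∈ D then f u' - 1 else f u') (A.w u u') ≤ if u ∈ D then f u - 1 else f u := by
  have hle : osub (if u' ∈ D then f u' - 1 else f u') (A.w u u') ≤ osub (f u') (A.w u u') :=
    osub_mono _ (by split_ifs <;> simp)
  by_cases hu : u ∈ D
  · rw [if_pos hu]
    rcases h.lt_or_eq with hlt | htight
    · exact ENat.le_sub_one_of_lt (hle.trans_lt hlt)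
    · have hu' : u' ∈ D := hclosed u hu u' ⟨hE, htight⟩
      rw [if_pos hu', osub_sub_one (hD u' hu'), htight]
  · rw [if_neg hu]
    exact hle.trans h

lemma IsEPM.lower (hf : IsEPM A f) (hD : ∀ u ∈ D, f u ≠ 0)
    (hclosed : ∀ u ∈ D, ∀ u', IsTight A f u u' → u' ∈ D) :
    IsEPM A (fun u => if u ∈ D then f u - 1 else f u) :=
  ⟨fun u hu => (hf.1 u hu).imp fun _ h => ⟨h.1, osub_lower_le hD hclosed h.1 h.2⟩,
    fun u hu u' hE => osub_lower_le hD hclosed hE (hf.2 u hu u' hE)⟩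

end lower

/-- A path of tight edges from `v` to a zero of `f`; each step leaves a vertex of `S` and removes it
from `S`, so the path is simple. -/
inductive TightPath (A : Arena V) (f : V → ℕ∞) : Finset V → V → Prop
  | zero {S : Finset V} {v : V} : f v = 0 → TightPath A f S v
  | cons {S : Finset V} {v v' : V} :
      v ∈ S → IsTight A f v v' → TightPath A f (S.erase v) v' → TightPath A f S v

namespace TightPath

variable {A : Arena V} {f : V → ℕ∞}

lemma mono {S T : Finset V} {v : V} (h : TightPath A f S v) (hST : S ⊆ T) :
    TightPath A f T v := by
  induction h generalizing T with
  | zero h0 => exact zero h0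
  | cons hv ht _ ih => exact cons (hST hv) ht (ih (Finset.erase_subset_erase _ hST))

lemma erase_or {S : Finset V} {v : V} (h : TightPath A f S v) (u : V) :
    TightPath A f (S.erase u) v ∨ TightPath A f S u := by
  induction h with
  | zero h0 => exact .inl (zero h0)
  | @cons S v v' hv ht htail ih =>
    by_cases huv : u = v
    · exact .inr (huv ▸ cons hv ht htail)
    · rcases ih with h' | h'
      · refine .inl (cons (Finset.mem_erase.2 ⟨Ne.symm huv, hv⟩) ht ?_)
        exact Finset.erase_right_comm (s := S) ▸ h'
      · exact .inr (h'.mono (Finset.erase_subset _ _))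

lemma of_isTight [Fintype V] {u v : V} (ht : IsTight A f u v) (h : TightPath A f .univ v) :
    TightPath A f .univ u :=
  (h.erase_or u).elim (cons (Finset.mem_univ u) ht) id

end TightPath

def maxLoss (A : Arena V) [Fintype V] (v : V) : ℕ :=
  (Finset.univ.filter (fun v' => A.E v v')).sup (fun v' => (-(A.w v v')).toNat)

lemma MGamma_eq_sum_maxLoss (A : Arena V) [Fintype V] : MGamma A = ∑ v, maxLoss A v := rfl

lemma toNat_neg_weight_le_maxLoss [Fintype V] {A : Arena V} {v v' : V} (h : A.E v v') :
    (-(A.w v v')).toNat ≤ maxLoss A v :=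
  Finset.le_sup (f := fun v' => (-(A.w v v')).toNat) (by simpa using h)

lemma TightPath.le_sum_maxLoss [Fintype V] {A : Arena V} {f : V → ℕ∞} {S : Finset V} {v : V}
    (h : TightPath A f S v) : f v ≤ ((∑ u ∈ S, maxLoss A u : ℕ) : ℕ∞) := by
  induction h with
  | zero h0 => simp [h0]
  | @cons S v v' hv ht _ ih =>
    calc f v = osub (f v') (A.w v v') := ht.2.symm
      _ ≤ f v' + ((-(A.w v v')).toNat : ℕ) := osub_le_add _ _
      _ ≤ ((∑ u ∈ S.erase v, maxLoss A u : ℕ) : ℕ∞) + (maxLoss A v : ℕ) :=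
        add_le_add ih (Nat.cast_le.2 (toNat_neg_weight_le_maxLoss ht.1))
      _ = ((∑ u ∈ S, maxLoss A u : ℕ) : ℕ∞) := by
        rw [← Nat.cast_add, Finset.sum_erase_add S _ hv]

lemma eq_top_of_le_sub_one {x : ℕ∞} (hx : x ≠ 0) (h : x ≤ x - 1) : x = ⊤ := by
  induction x using ENat.recTopCoe with
  | top => rfl
  | coe m =>
    have hm : m ≠ 0 := by exact_mod_cast hx
    rw [← Nat.cast_one, ← ENat.natCast_sub, Nat.cast_le] at h
    omega

lemma tightPath_of_ne_top [Fintype V] {A : Arena V} {f : V → ℕ∞} (hf : IsEPM A f)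
    (hleast : ∀ g : V → ℕ∞, IsEPM A g → ∀ v, f v ≤ g v) {v : V} (hv : f v ≠ ⊤) :
    TightPath A f .univ v := by
  set D : Set V := {u | f u ≠ 0 ∧ ¬ TightPath A f .univ u}
  have hclosed : ∀ u ∈ D, ∀ u', IsTight A f u u' → u' ∈ D := fun u hu u' ht =>
    ⟨fun h0 => hu.2 (.of_isTight ht (.zero h0)), fun h => hu.2 (.of_isTight ht h)⟩
  by_contra hnot
  have hvD : v ∈ D := ⟨fun h0 => hnot (.zero h0), hnot⟩
  have hlow := hleast _ (hf.lower (fun u hu => hu.1) hclosed) v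
  rw [if_pos hvD] at hlow
  exact hv (eq_top_of_le_sub_one hvD.1 hlow)

section strategy

variable {A : Arena V} {σ : V → V}

lemma exists_play_consistent0 (hσ : Strategy0 A σ) (u : V) :
    ∃ ρ, IsPlay A u ρ ∧ Consistent0 A σ ρ := by
  choose s hs using A.total
  let τ : V → V := fun v => if A.P0 v then σ v else s v
  have hτ : ∀ v, A.E v (τ v) := fun v => by
    by_cases hv : A.P0 v
    · simpa [τ, hv] using hσ v hv
    · simpa [τ, hv] using hs v
  refine ⟨fun n => τ^[n] u, ⟨rfl, fun i => ?_⟩, fun j hj => ?_⟩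
  · simpa only [Function.iterate_succ_apply'] using hτ _
  · simp only [Function.iterate_succ_apply', τ, if_pos hj]

def prependPlay (u : V) (ρ : ℕ → V) : ℕ → V
  | 0 => u
  | n + 1 => ρ n

lemma energy_prependPlay (u : V) (ρ : ℕ → V) {c c' : ℕ} (hc : (c' : ℤ) = c + A.w u (ρ 0))
    (j : ℕ) : energy A c (prependPlay u ρ) (j + 1) = energy A c' ρ j := by
  simp only [energy, Finset.sum_range_succ', prependPlay, hc]
  ring

lemma WinningFrom.step (hσ : Strategy0 A σ) {u u' : V} {c : ℕ} (hw : WinningFrom A σ u c)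
    (hE : A.E u u') (hcons : A.P0 u → u' = σ u) :
    ∃ c' : ℕ, (c' : ℤ) = c + A.w u u' ∧ WinningFrom A σ u' c' := by
  have hprepend : ∀ ρ, IsPlay A u' ρ → Consistent0 A σ ρ →
      IsPlay A u (prependPlay u ρ) ∧ Consistent0 A σ (prependPlay u ρ) := by
    rintro ρ ⟨h0, hρ⟩ hρσ
    refine ⟨⟨rfl, ?_⟩, ?_⟩
    · rintro (_ | i)
      · simpa [prependPlay, h0] using hE
      · exact hρ i
    · rintro (_ | j) hj
      · simpa [prependPlay, h0] using hcons hj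
      · exact hρσ j hj
  obtain ⟨ρ₀, hρ₀, hρ₀σ⟩ := exists_play_consistent0 hσ u'
  have hnonneg : 0 ≤ (c : ℤ) + A.w u u' := by
    have := hw _ (hprepend ρ₀ hρ₀ hρ₀σ).1 (hprepend ρ₀ hρ₀ hρ₀σ).2 1
    simpa [energy, prependPlay, hρ₀.1] using this
  refine ⟨(c + A.w u u').toNat, Int.toNat_of_nonneg hnonneg, fun ρ hρ hρσ j => ?_⟩
  rw [← energy_prependPlay (c := c) u ρ (by rw [Int.toNat_of_nonneg hnonneg, hρ.1])]
  exact hw _ (hprepend ρ hρ hρσ).1 (hprepend ρ hρ hρσ).2 (j + 1)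

def minCredit (A : Arena V) (σ : V → V) (v : V) : ℕ∞ :=
  ⨅ (c : ℕ) (_ : WinningFrom A σ v c), (c : ℕ∞)

lemma minCredit_ne_top {v : V} {c : ℕ} (hw : WinningFrom A σ v c) : minCredit A σ v ≠ ⊤ :=
  ne_top_of_le_ne_top (ENat.natCast_ne_top c) (iInf₂_le c hw)

lemma isEPM_minCredit (hσ : Strategy0 A σ) : IsEPM A (minCredit A σ) := by
  have hedge : ∀ u u', A.E u u' → (A.P0 u → u' = σ u) →
      osub (minCredit A σ u') (A.w u u') ≤ minCredit A σ u := fun u u' hE hcons =>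
    le_iInf₂ fun c hw => by
      obtain ⟨c', hc', hw'⟩ := hw.step hσ hE hcons
      calc osub (minCredit A σ u') (A.w u u')
          ≤ osub c' (A.w u u') := osub_mono _ (iInf₂_le c' hw')
        _ = c := by rw [osub_natCast, hc']; simp
  exact ⟨fun u hu => ⟨σ u, hσ u hu, hedge u _ (hσ u hu) fun _ => rfl⟩,
    fun u hu u' hE => hedge u u' hE fun h => absurd h hu⟩

end strategy

theorem stmt7_general {V : Type} [Fintype V] (A : Arena V)
    (fstar : V → ℕ∞) (hEPM : IsEPM A fstar)
    (hleast : ∀ f : V → ℕ∞, IsEPM A f → ∀ v, fstar v ≤ f v) :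
    ∀ v : V, v ∈ W0 A → fstar v ≤ (MGamma A : ℕ∞) := by
  rintro v ⟨σ, hσ, c, hw⟩
  have hfinite : fstar v ≠ ⊤ :=
    ne_top_of_le_ne_top (minCredit_ne_top hw) (hleast _ (isEPM_minCredit hσ) v)
  rw [MGamma_eq_sum_maxLoss]
  exact (tightPath_of_ne_top hEPM hleast hfinite).le_sum_maxLoss

/-- The least energy progress measure is at most `M_Γ` on every vertex of player 0's
winning region `W₀`. -/
theorem stmt7 {V : Type} [Fintype V] [Nonempty V] (A : Arena V)
    (fstar : V → ℕ∞) (hEPM : IsEPM A fstar)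
    (hleast : ∀ f : V → ℕ∞, IsEPM A f → ∀ v, fstar v ≤ f v) :
    ∀ v : V, v ∈ W0 A → fstar v ≤ (MGamma A : ℕ∞) :=
  stmt7_general A fstar hEPM hleast
end
end

section
/- Let G = (V,E,w) be a finite weighted graph in which every vertex has at least one outgoing edge, and let v ∈ V be a vertex such that every cycle reachable from v in G is nonnegative. Then every finite path starting at v has total weight at least −(|V|−1)·W, where W = max({0} ∪ {−w(e) : e ∈ E}). In particular the prefix sums of every infinite path from v are bounded from below. -/
open scoped Classical
noncomputable section

variable {V : Type}

section WeightedPaths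

variable (E : V → V → Prop) (w : V → V → ℤ)

def IsPath (p : ℕ → V) (n : ℕ) : Prop :=
  ∀ i < n, E (p i) (p (i + 1))

def pathWeight (p : ℕ → V) (n : ℕ) : ℤ :=
  ∑ i ∈ Finset.range n, w (p i) (p (i + 1))

def NonnegCyclesFrom (v : V) : Prop :=
  ∀ (m : ℕ) (p : ℕ → V), 1 ≤ m → p 0 = p m → IsPath E p m →
    (∃ (k : ℕ) (q : ℕ → V), q 0 = v ∧ q k = p 0 ∧ IsPath E q k) →
    0 ≤ pathWeight w p m

variable {E w}

theorem isPath_add {p : ℕ → V} {a b : ℕ} :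
    IsPath E p (a + b) ↔ IsPath E p a ∧ IsPath E (fun j => p (a + j)) b := by
  refine ⟨fun h => ⟨fun i hi => h i (by omega), fun j hj => h (a + j) (by omega)⟩, ?_⟩
  rintro ⟨hpre, hsuf⟩ i hi
  rcases lt_or_ge i a with hia | hia
  · exact hpre i hia
  · obtain ⟨j, rfl⟩ := Nat.exists_eq_add_of_le hia
    exact hsuf j (by omega)

theorem pathWeight_add (p : ℕ → V) (a b : ℕ) :
    pathWeight w p (a + b) = pathWeight w p a + pathWeight w (fun j => p (a + j)) b :=
  Finset.sum_range_add _ a b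

theorem neg_mul_le_pathWeight_of_forall_le {W : ℕ} (hW : ∀ a b, E a b → -(W : ℤ) ≤ w a b)
    {p : ℕ → V} {n : ℕ} (hp : IsPath E p n) : -((n * W : ℕ) : ℤ) ≤ pathWeight w p n := by
  calc -((n * W : ℕ) : ℤ) = ∑ _i ∈ Finset.range n, -(W : ℤ) := by simp
    _ ≤ pathWeight w p n :=
      Finset.sum_le_sum fun i hi => hW _ _ (hp i (Finset.mem_range.mp hi))

/-- `p` with the loop `p a … p (a + m)` removed, when `p a = p (a + m)`. -/
def cutOut (p : ℕ → V) (a m : ℕ) : ℕ → V :=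
  fun i => if i < a then p i else p (i + m)

theorem cutOut_of_le {p : ℕ → V} {a m i : ℕ} (hloop : p a = p (a + m)) (hi : i ≤ a) :
    cutOut p a m i = p i := by
  unfold cutOut
  split_ifs with h
  · rfl
  · rw [show i = a by omega]
    exact hloop.symm

theorem cutOut_add (p : ℕ → V) (a m j : ℕ) : cutOut p a m (a + j) = p (a + m + j) := by
  simp only [cutOut, show ¬ a + j < a by omega, if_false]
  congr 1
  omega

theorem cutOut_prefix_eq {p : ℕ → V} {a m : ℕ} (hloop : p a = p (a + m)) :
    ∀ i < a, cutOut p a m i = p i ∧ cutOut p a m (i + 1) = p (i + 1) :=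
  fun _ hi => ⟨cutOut_of_le hloop hi.le, cutOut_of_le hloop hi⟩

theorem IsPath.cutOut {p : ℕ → V} {a m k : ℕ} (hloop : p a = p (a + m))
    (hp : IsPath E p (a + m + k)) : IsPath E (cutOut p a m) (a + k) := by
  obtain ⟨hpre, hsuf⟩ := isPath_add.mp hp
  refine isPath_add.mpr ⟨fun i hi => ?_, fun j hj => ?_⟩
  · obtain ⟨h₀, h₁⟩ := cutOut_prefix_eq hloop i hi
    rw [h₀, h₁]
    exact (isPath_add.mp hpre).1 i hi
  · simp only [cutOut_add]
    exact hsuf j hj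

theorem pathWeight_eq_cutOut_add_cycle {p : ℕ → V} {a m k : ℕ} (hloop : p a = p (a + m)) :
    pathWeight w p (a + m + k) =
      pathWeight w (cutOut p a m) (a + k) + pathWeight w (fun j => p (a + j)) m := by
  have hpre : pathWeight w (cutOut p a m) a = pathWeight w p a :=
    Finset.sum_congr rfl fun i hi => by
      obtain ⟨h₀, h₁⟩ := cutOut_prefix_eq hloop i (Finset.mem_range.mp hi)
      rw [h₀, h₁]
  have hsuf : pathWeight w (fun j => cutOut p a m (a + j)) k =
      pathWeight w (fun j => p (a + m + j)) k := by
    simp only [cutOut_add]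
  rw [pathWeight_add, pathWeight_add p a m, pathWeight_add (cutOut p a m), hpre, hsuf]
  ring

end WeightedPaths

theorem exists_lt_le_card_apply_eq [Fintype V] (p : ℕ → V) :
    ∃ a b, a < b ∧ b ≤ Fintype.card V ∧ p a = p b := by
  obtain ⟨i, j, hij, he⟩ :=
    Fintype.exists_ne_map_eq_of_card_lt (fun i : Fin (Fintype.card V + 1) => p i) (by simp)
  rcases lt_or_gt_of_ne (Fin.val_ne_of_ne hij) with h | h
  · exact ⟨i, j, h, Nat.lt_succ_iff.mp j.isLt, he⟩
  · exact ⟨j, i, h, Nat.lt_succ_iff.mp i.isLt, he.symm⟩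

/-- A path longer than `|V| - 1` repeats a vertex; cutting out the cycle in between, whose
weight is nonnegative, shortens the path without increasing its weight. -/
theorem neg_mul_card_le_pathWeight [Fintype V] {E : V → V → Prop} {w : V → V → ℤ} {v : V}
    {W : ℕ} (hW : ∀ a b, E a b → -(W : ℤ) ≤ w a b) (hcyc : NonnegCyclesFrom E w v) :
    ∀ (n : ℕ) (p : ℕ → V), p 0 = v → IsPath E p n →
      -(((Fintype.card V - 1) * W : ℕ) : ℤ) ≤ pathWeight w p n := by
  intro n
  induction n using Nat.strong_induction_on with
  | _ n ih =>
  intro p hp0 hp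
  by_cases hn : n < Fintype.card V
  · have hnW : n * W ≤ (Fintype.card V - 1) * W := Nat.mul_le_mul_right _ (by omega)
    have := neg_mul_le_pathWeight_of_forall_le hW hp
    omega
  obtain ⟨a, b, hab, hb, hrep⟩ := exists_lt_le_card_apply_eq p
  obtain ⟨m, rfl⟩ := Nat.exists_eq_add_of_lt hab
  obtain ⟨k, rfl⟩ := Nat.exists_eq_add_of_le (show a + m + 1 ≤ n by omega)
  have hp' : IsPath E p (a + (m + 1) + k) := hp
  have hcycle : 0 ≤ pathWeight w (fun j => p (a + j)) (m + 1) := by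
    have hprefix := (isPath_add.mp hp').1
    exact hcyc (m + 1) _ (by omega) hrep (isPath_add.mp hprefix).2
      ⟨a, p, hp0, rfl, (isPath_add.mp hprefix).1⟩
  have hshort := ih (a + k) (by omega) (cutOut p a (m + 1))
    ((cutOut_of_le hrep (Nat.zero_le a)).trans hp0) (hp'.cutOut hrep)
  rw [show a + m + 1 + k = a + (m + 1) + k by omega, pathWeight_eq_cutOut_add_cycle hrep]
  omega

def maxNegWeight [Fintype V] (E : V → V → Prop) (w : V → V → ℤ) : ℕ :=
  (Finset.univ.filter (fun e : V × V => E e.1 e.2)).sup (fun e => (-(w e.1 e.2)).toNat)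

theorem neg_maxNegWeight_le [Fintype V] {E : V → V → Prop} (w : V → V → ℤ) {a b : V}
    (hab : E a b) : -(maxNegWeight E w : ℤ) ≤ w a b := by
  have : (-(w a b)).toNat ≤ maxNegWeight E w :=
    Finset.le_sup (f := fun e : V × V => (-(w e.1 e.2)).toNat)
      (show (a, b) ∈ Finset.univ.filter (fun e : V × V => E e.1 e.2) by simpa using hab)
  omega

theorem stmt16_general {V : Type} [Fintype V] (E : V → V → Prop) (w : V → V → ℤ)
    (v : V)
    (hcyc : ∀ (m : ℕ) (p : ℕ → V), 1 ≤ m → p 0 = p m →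
      (∀ i < m, E (p i) (p (i + 1))) →
      (∃ (k : ℕ) (q : ℕ → V), q 0 = v ∧ q k = p 0 ∧ ∀ i < k, E (q i) (q (i + 1))) →
      0 ≤ ∑ i ∈ Finset.range m, w (p i) (p (i + 1))) :
    (∀ (n : ℕ) (p : ℕ → V), p 0 = v → (∀ i < n, E (p i) (p (i + 1))) →
      -(((Fintype.card V - 1) *
          (Finset.univ.filter (fun e : V × V => E e.1 e.2)).sup
            (fun e => (-(w e.1 e.2)).toNat) : ℕ) : ℤ) ≤
        ∑ i ∈ Finset.range n, w (p i) (p (i + 1))) ∧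
    (∀ ρ : ℕ → V, ρ 0 = v → (∀ i, E (ρ i) (ρ (i + 1))) →
      ∃ B : ℤ, ∀ n, B ≤ ∑ i ∈ Finset.range n, w (ρ i) (ρ (i + 1))) := by
  have hpath : ∀ (n : ℕ) (p : ℕ → V), p 0 = v → IsPath E p n →
      -(((Fintype.card V - 1) * maxNegWeight E w : ℕ) : ℤ) ≤ pathWeight w p n :=
    neg_mul_card_le_pathWeight (fun _ _ => neg_maxNegWeight_le w) hcyc
  exact ⟨hpath, fun ρ hρ0 hρ => ⟨_, fun n => hpath n ρ hρ0 fun i _ => hρ i⟩⟩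

/-- In a finite total weighted graph in which every cycle reachable from `v` is
nonnegative, every finite path from `v` has total weight at least `−(|V|−1)·W`, where
`W = max({0} ∪ {−w(e) : e ∈ E})`; in particular the prefix sums of every infinite path
from `v` are bounded from below. -/
theorem stmt16 {V : Type} [Fintype V] (E : V → V → Prop) (w : V → V → ℤ)
    (htotal : ∀ v, ∃ v', E v v') (v : V)
    (hcyc : ∀ (m : ℕ) (p : ℕ → V), 1 ≤ m → p 0 = p m →
      (∀ i < m, E (p i) (p (i + 1))) →
      (∃ (k : ℕ) (q : ℕ → V), q 0 = v ∧ q k = p 0 ∧ ∀ i < k, E (q i) (q (i + 1))) →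
      0 ≤ ∑ i ∈ Finset.range m, w (p i) (p (i + 1))) :
    (∀ (n : ℕ) (p : ℕ → V), p 0 = v → (∀ i < n, E (p i) (p (i + 1))) →
      -(((Fintype.card V - 1) *
          (Finset.univ.filter (fun e : V × V => E e.1 e.2)).sup
            (fun e => (-(w e.1 e.2)).toNat) : ℕ) : ℤ) ≤
        ∑ i ∈ Finset.range n, w (p i) (p (i + 1))) ∧
    (∀ ρ : ℕ → V, ρ 0 = v → (∀ i, E (ρ i) (ρ (i + 1))) →
      ∃ B : ℤ, ∀ n, B ≤ ∑ i ∈ Finset.range n, w (ρ i) (ρ (i + 1))) :=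
  stmt16_general E w v hcyc
end
end
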